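/- arXiv:1807.04245 — 2 statements merged into one kernel-verified Lean document; each statement's English description precedes it below -/
import Mathlib

section
/- Let ρ > 0, d ∈ R, and n, n' ∈ R^m with n^T n' < d. If (y, ω) is a local minimizer of (ρ/2)‖y − n‖₂² + (ρ/2)‖ω − n'‖₂² subject to y^T ω ≥ d, then the constraint is active: y^T ω = d. -/
/-!
If the constraint were inactive at `(y, ω)`, then `(y, ω)` would be an interior point of the
feasible set, hence a local minimizer of the unconstrained objective. The objective is convex, so
`(y, ω)` would be a global minimizer; its value there would then be at most its value `0` at
`(n, n')`, forcing `(y, ω) = (n, n')`, which is infeasible.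
-/

open Matrix Set Filter Topology

section
variable {ι : Type*} [Fintype ι]

theorem convexOn_sum_sub_sq (c : ι → ℝ) :
    ConvexOn ℝ univ fun x : ι → ℝ => ∑ i, (x i - c i) ^ 2 := by
  refine ⟨convex_univ, fun x _ y _ a b ha hb hab => ?_⟩
  simp only [Pi.add_apply, Pi.smul_apply, smul_eq_mul, Finset.mul_sum, ← Finset.sum_add_distrib]
  refine Finset.sum_le_sum fun i _ => ?_
  have hsplit : a * x i + b * y i - c i = a * (x i - c i) + b * (y i - c i) := by
    linear_combination c i * hab
  simpa [hsplit] using (Even.convexOn_pow (𝕜 := ℝ) even_two).2 trivial trivial ha hb hab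

theorem eq_of_sum_sub_sq_nonpos {x c : ι → ℝ} (h : ∑ i, (x i - c i) ^ 2 ≤ 0) : x = c := by
  have hzero := (Finset.sum_eq_zero_iff_of_nonneg fun i _ => sq_nonneg (x i - c i)).1
    (h.antisymm (by positivity))
  funext i
  simpa [sub_eq_zero] using hzero i (Finset.mem_univ i)

end

/-- When the input violates the bilinear constraint (`nᵀn' < d`), any local
minimizer of the bilinear proximal problem lies on the boundary: `yᵀω = d`. -/
theorem prox_bilinear_constraint_active
    {m : ℕ} (ρ d : ℝ) (hρ : 0 < ρ) (n n' : Fin m → ℝ)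
    (h : n ⬝ᵥ n' < d) (y ω : Fin m → ℝ)
    (hfeas : d ≤ y ⬝ᵥ ω)
    (hloc : ∃ ε > (0 : ℝ), ∀ y' ω' : Fin m → ℝ, d ≤ y' ⬝ᵥ ω' →
      (∑ i, (y' i - y i) ^ 2) + (∑ i, (ω' i - ω i) ^ 2) < ε →
      ρ / 2 * (∑ i, (y i - n i) ^ 2) + ρ / 2 * (∑ i, (ω i - n' i) ^ 2) ≤
        ρ / 2 * (∑ i, (y' i - n i) ^ 2) + ρ / 2 * (∑ i, (ω' i - n' i) ^ 2)) :
    y ⬝ᵥ ω = d := by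
  by_contra hne
  obtain ⟨ε, hε, hmin⟩ := hloc
  let F : (Fin m → ℝ) × (Fin m → ℝ) → ℝ := fun p =>
    ρ / 2 * (∑ i, (p.1 i - n i) ^ 2) + ρ / 2 * (∑ i, (p.2 i - n' i) ^ 2)
  have hconstrained : IsLocalMinOn F {p | d ≤ p.1 ⬝ᵥ p.2} (y, ω) := by
    have hball : {p : (Fin m → ℝ) × (Fin m → ℝ) |
        (∑ i, (p.1 i - y i) ^ 2) + (∑ i, (p.2 i - ω i) ^ 2) < ε} ∈ 𝓝 (y, ω) :=
      (isOpen_lt (by fun_prop) continuous_const).mem_nhds (by simpa using hε)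
    filter_upwards [self_mem_nhdsWithin, nhdsWithin_le_nhds hball] with p hp hpε
    exact hmin p.1 p.2 hp hpε
  have hinterior : {p | d ≤ p.1 ⬝ᵥ p.2} ∈ 𝓝 (y, ω) := by
    have hopen : IsOpen {p : (Fin m → ℝ) × (Fin m → ℝ) | d < p.1 ⬝ᵥ p.2} :=
      isOpen_lt continuous_const (by fun_prop)
    filter_upwards [hopen.mem_nhds (by exact hfeas.lt_of_ne' hne)] with p hp using hp.le
  have hconvex : ConvexOn ℝ univ F :=
    (((convexOn_sum_sub_sq n).comp_linearMap (LinearMap.fst ℝ _ _)).smul (by positivity)).add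
      (((convexOn_sum_sub_sq n').comp_linearMap (LinearMap.snd ℝ _ _)).smul (by positivity))
  have hle : ρ / 2 * (∑ i, (y i - n i) ^ 2) + ρ / 2 * (∑ i, (ω i - n' i) ^ 2) ≤ 0 := by
    simpa [F] using IsMinOn.of_isLocalMin_of_convex_univ (hconstrained.isLocalMin hinterior)
      hconvex (n, n')
  have hS₁ : 0 ≤ ∑ i, (y i - n i) ^ 2 := by positivity
  have hS₂ : 0 ≤ ∑ i, (ω i - n' i) ^ 2 := by positivity
  obtain rfl : y = n := eq_of_sum_sub_sq_nonpos (by nlinarith)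
  obtain rfl : ω = n' := eq_of_sum_sub_sq_nonpos (by nlinarith)
  exact h.not_ge hfeas
end

section
/- Let n, n' ∈ R^m, d ∈ R, and x ∈ R with x² ≠ 1. Define y = (n − x n')/(1 − x²) and ω = (n' − x n)/(1 − x²). Then y^T ω = d if and only if x satisfies the quartic equation d x⁴ + (−2d − n^T n') x² + (n^T n + n'^T n') x + (d − n^T n') = 0. -/
/-!
Writing `y = c • (n - x • n')` and `ω = c • (n' - x • n)` with `c = (1 - x²)⁻¹`, bilinearity gives
`yᵀω = c² ((1 + x²) nᵀn' - x (nᵀn + n'ᵀn'))`; clearing the nonzero factor `c²` turns `yᵀω = d`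
into the quartic.
-/

open Matrix

lemma dotProduct_sub_smul_sub_smul {R ι : Type*} [CommRing R] [Fintype ι] (x : R) (u v : ι → R) :
    (u - x • v) ⬝ᵥ (v - x • u) = (1 + x ^ 2) * (u ⬝ᵥ v) - x * (u ⬝ᵥ u + v ⬝ᵥ v) := by
  simp only [sub_dotProduct, dotProduct_sub, smul_dotProduct, dotProduct_smul, smul_eq_mul,
    dotProduct_comm v u]
  ring

/-- The active-constraint condition `yᵀω = d` for the closed-form stationary
points of the bilinear proximal operator is equivalent to a quartic equation
in `x = λ/ρ`. -/
theorem prox_bilinear_quartic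
    {m : ℕ} (d x : ℝ) (hx : x ^ 2 ≠ 1) (n n' : Fin m → ℝ)
    (y ω : Fin m → ℝ)
    (hy : y = fun i => (n i - x * n' i) / (1 - x ^ 2))
    (hω : ω = fun i => (n' i - x * n i) / (1 - x ^ 2)) :
    y ⬝ᵥ ω = d ↔
      d * x ^ 4 + (-2 * d - n ⬝ᵥ n') * x ^ 2 +
        (n ⬝ᵥ n + n' ⬝ᵥ n') * x + (d - n ⬝ᵥ n') = 0 := by
  have hc : 1 - x ^ 2 ≠ 0 := sub_ne_zero.2 (Ne.symm hx)
  have hy' : y = (1 - x ^ 2)⁻¹ • (n - x • n') := by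
    rw [hy]; ext i; simp [div_eq_inv_mul]
  have hω' : ω = (1 - x ^ 2)⁻¹ • (n' - x • n) := by
    rw [hω]; ext i; simp [div_eq_inv_mul]
  have hyω : y ⬝ᵥ ω = ((1 + x ^ 2) * (n ⬝ᵥ n') - x * (n ⬝ᵥ n + n' ⬝ᵥ n')) / (1 - x ^ 2) ^ 2 := by
    rw [hy', hω', smul_dotProduct, dotProduct_smul, dotProduct_sub_smul_sub_smul, smul_eq_mul,
      smul_eq_mul]
    field_simp
  rw [hyω, div_eq_iff (pow_ne_zero 2 hc)]
  constructor <;> intro h <;> linear_combination -h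
end
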